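/- Let L = {1} ∪ {g ∈ F_2 : a_1 is a prefix of g} ∈ X_2 (the 'branch' of the Cayley tree of F_2 in the direction of the generator a_1). Then the closure of the orbit O(L) in (X_2, d_2) equals O(L) ∪ {F_2}, where F_2 ∈ X_2 denotes the vertex set of the full Cayley tree; moreover F_2 ∉ O(L), and {F_2} is a fixed point of the action (F_2 · g = F_2 for every g ∈ F_2). In particular the closure of O(L) consists of exactly two orbits. -/

import Mathlib

/-! A translate `L · g` agrees with the full tree on the ball of radius `|g|`: cancelling at
most `|g|` letters of a reduced word that starts with `a₁` leaves the empty word or a word that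
still starts with `a₁`. As only finitely many `g` have bounded length, `g ↦ L · g` tends to the
full tree along the cofinite filter, so the closure of its range, the orbit, adds exactly this
limit. The full tree is not a translate of `L`, because `L` misses `a₂`. -/

open Filter
open scoped ENNReal

noncomputable section

namespace GraphTrees

/-- The word length of an element of a free group: the length of its reduced word. -/
def wlen {n : ℕ} (g : FreeGroup (Fin n)) : ℕ := (FreeGroup.toWord g).length

/-- `h` is a prefix of `g`. -/
def IsPref {n : ℕ} (h g : FreeGroup (Fin n)) : Prop :=
  wlen h + wlen (h⁻¹ * g) = wlen g

/-- Vertex sets of infinite connected subtrees of the Cayley graph of the free group on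
`n` generators which contain the identity: subsets containing `1`, infinite, and
prefix-closed. -/
def IsTree {n : ℕ} (S : Set (FreeGroup (Fin n))) : Prop :=
  1 ∈ S ∧ S.Infinite ∧ ∀ g ∈ S, ∀ h : FreeGroup (Fin n), IsPref h g → h ∈ S

/-- The space `X n` of pointed trees. -/
def X (n : ℕ) : Type := {S : Set (FreeGroup (Fin n)) // IsTree S}

variable {n : ℕ}

/-- The pattern `B_S(m)` of radius `m` of a pointed tree. -/
def ball (S : X n) (m : ℕ) : Set (FreeGroup (Fin n)) := {g ∈ S.1 | wlen g ≤ m}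

/-- The set of radii on which two pointed trees have the same pattern. -/
def agreeSet (S S' : X n) : Set ℕ := {m | ball S m = ball S' m}

/-- The ball metric on the space of pointed trees. -/
def tdist (S S' : X n) : ℝ :=
  letI := Classical.propDecidable (S = S')
  if S = S' then 0 else Real.exp (-((sSup (agreeSet S S') : ℕ) : ℝ))

theorem tdist_eq_of_ne {x y : X n} (h : x ≠ y) :
    tdist x y = Real.exp (-((sSup (agreeSet x y) : ℕ) : ℝ)) := by
  unfold tdist
  rw [if_neg h]

theorem ball_mono_eq {x y : X n} {k m : ℕ} (hkm : k ≤ m)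
    (h : ball x m = ball y m) : ball x k = ball y k := by
  ext g
  constructor
  · rintro ⟨hg, hlen⟩
    have hx : g ∈ ball x m := ⟨hg, hlen.trans hkm⟩
    rw [h] at hx
    exact ⟨hx.1, hlen⟩
  · rintro ⟨hg, hlen⟩
    have hy : g ∈ ball y m := ⟨hg, hlen.trans hkm⟩
    rw [← h] at hy
    exact ⟨hy.1, hlen⟩

theorem eq_of_agree_all {x y : X n} (h : ∀ m, ball x m = ball y m) : x = y := by
  apply Subtype.ext
  ext g
  constructor
  · intro hg
    have hx : g ∈ ball x (wlen g) := ⟨hg, le_rfl⟩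
    rw [h] at hx
    exact hx.1
  · intro hg
    have hy : g ∈ ball y (wlen g) := ⟨hg, le_rfl⟩
    rw [← h] at hy
    exact hy.1

theorem bddAbove_agreeSet {x y : X n} (h : x ≠ y) : BddAbove (agreeSet x y) := by
  by_contra hb
  refine h (eq_of_agree_all fun m => ?_)
  rcases not_bddAbove_iff.mp hb m with ⟨k, hk, hmk⟩
  exact ball_mono_eq hmk.le hk

theorem ball_zero (x : X n) : ball x 0 = {1} := by
  ext g
  simp only [ball, Set.mem_setOf_eq, Nat.le_zero, Set.mem_singleton_iff]
  constructor
  · rintro ⟨hg, hlen⟩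
    exact FreeGroup.toWord_eq_nil_iff.mp (List.length_eq_zero_iff.mp hlen)
  · rintro rfl
    exact ⟨x.2.1, by simp [wlen]⟩

theorem zero_mem_agreeSet (x y : X n) : (0 : ℕ) ∈ agreeSet x y := by
  show ball x 0 = ball y 0
  rw [ball_zero, ball_zero]

theorem tdist_nonneg (x y : X n) : 0 ≤ tdist x y := by
  rcases eq_or_ne x y with rfl | h
  · unfold tdist
    rw [if_pos rfl]
  · rw [tdist_eq_of_ne h]
    exact (Real.exp_pos _).le

theorem tdist_self (x : X n) : tdist x x = 0 := by
  unfold tdist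
  rw [if_pos rfl]

theorem tdist_comm (x y : X n) : tdist x y = tdist y x := by
  by_cases h : x = y
  · subst h; rfl
  · have hs : agreeSet x y = agreeSet y x := by
      ext m
      exact eq_comm
    rw [tdist_eq_of_ne h, tdist_eq_of_ne (Ne.symm h), hs]

theorem tdist_ultra (x y z : X n) : tdist x z ≤ max (tdist x y) (tdist y z) := by
  rcases eq_or_ne x z with rfl | hxz
  · exact le_max_of_le_left (by rw [tdist_self]; exact tdist_nonneg x y)
  rcases eq_or_ne x y with rfl | hxy
  · exact le_max_of_le_right le_rfl
  rcases eq_or_ne y z with rfl | hyz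
  · exact le_max_of_le_left le_rfl
  have hbxy := bddAbove_agreeSet hxy
  have hbyz := bddAbove_agreeSet hyz
  have hbxz := bddAbove_agreeSet hxz
  have hma : sSup (agreeSet x y) ∈ agreeSet x y :=
    Nat.sSup_mem ⟨0, zero_mem_agreeSet x y⟩ hbxy
  have hmb : sSup (agreeSet y z) ∈ agreeSet y z :=
    Nat.sSup_mem ⟨0, zero_mem_agreeSet y z⟩ hbyz
  have hmin : min (sSup (agreeSet x y)) (sSup (agreeSet y z)) ∈ agreeSet x z := by
    have h1 : ball x (min (sSup (agreeSet x y)) (sSup (agreeSet y z)))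
        = ball y (min (sSup (agreeSet x y)) (sSup (agreeSet y z))) :=
      ball_mono_eq (min_le_left _ _) hma
    have h2 : ball y (min (sSup (agreeSet x y)) (sSup (agreeSet y z)))
        = ball z (min (sSup (agreeSet x y)) (sSup (agreeSet y z))) :=
      ball_mono_eq (min_le_right _ _) hmb
    exact h1.trans h2
  have hle : min (sSup (agreeSet x y)) (sSup (agreeSet y z)) ≤ sSup (agreeSet x z) :=
    le_csSup hbxz hmin
  rw [tdist_eq_of_ne hxz, tdist_eq_of_ne hxy, tdist_eq_of_ne hyz]
  rcases le_total (sSup (agreeSet x y)) (sSup (agreeSet y z)) with hab | hab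
  · refine le_max_of_le_left (Real.exp_le_exp.mpr ?_)
    have h2 : ((sSup (agreeSet x y) : ℕ) : ℝ) ≤ ((sSup (agreeSet x z) : ℕ) : ℝ) := by
      exact_mod_cast (min_eq_left hab) ▸ hle
    linarith
  · refine le_max_of_le_right (Real.exp_le_exp.mpr ?_)
    have h2 : ((sSup (agreeSet y z) : ℕ) : ℝ) ≤ ((sSup (agreeSet x z) : ℕ) : ℝ) := by
      exact_mod_cast (min_eq_right hab) ▸ hle
    linarith

theorem tdist_triangle (x y z : X n) : tdist x z ≤ tdist x y + tdist y z :=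
  (tdist_ultra x y z).trans
    (max_le (le_add_of_nonneg_right (tdist_nonneg y z))
      (le_add_of_nonneg_left (tdist_nonneg x y)))

instance : MetricSpace (X n) where
  dist := tdist
  dist_self := tdist_self
  dist_comm := tdist_comm
  dist_triangle := tdist_triangle
  eq_of_dist_eq_zero := by
    intro x y h
    by_contra hne
    have h' : tdist x y = 0 := h
    rw [tdist_eq_of_ne hne] at h'
    exact (Real.exp_pos _).ne' h'

theorem dist_eq_tdist (x y : X n) : dist x y = tdist x y := rfl

/-- The translate `S · g` of a tree `S` by a vertex `g ∈ S`. -/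
def translate {n : ℕ} (S : Set (FreeGroup (Fin n))) (g : FreeGroup (Fin n)) :
    Set (FreeGroup (Fin n)) := (fun h => g⁻¹ * h) '' S

/-- The orbit `O(S) = {S · g : g ∈ S}` of a pointed tree under the pseudogroup action. -/
def orbit (S : X n) : Set (X n) := {S' | ∃ g ∈ S.1, S'.1 = translate S.1 g}

/-- A subset `Y ⊆ X n` is invariant under the pseudogroup action. -/
def Invariant (Y : Set (X n)) : Prop :=
  ∀ S ∈ Y, ∀ g ∈ S.1, ∀ S' : X n, S'.1 = translate S.1 g → S' ∈ Y

/-- `Λ(Z, m)`: the number of distinct patterns of radius `m` of trees in `Z`. -/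
def Lam (Z : Set (X n)) (m : ℕ) : ℕ := ((fun S => ball S m) '' Z).ncard

/-- The lower box dimension of a subset of the space of pointed trees. -/
def lowerBox (Z : Set (X n)) : ℝ≥0∞ :=
  Filter.liminf (fun m : ℕ => ENNReal.ofReal (Real.log (Lam Z m)) / (m : ℝ≥0∞)) Filter.atTop

/-- The upper box dimension of a subset of the space of pointed trees. -/
def upperBox (Z : Set (X n)) : ℝ≥0∞ :=
  Filter.limsup (fun m : ℕ => ENNReal.ofReal (Real.log (Lam Z m)) / (m : ℝ≥0∞)) Filter.atTop


/-- The branch of the Cayley tree of `F_2` in the direction of the first generator. -/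
def branchL : Set (FreeGroup (Fin 2)) :=
  {1} ∪ {g | IsPref (FreeGroup.of (0 : Fin 2)) g}

end GraphTrees

namespace FreeGroup

variable {α : Type*}

theorem IsReduced.exists_cancel_append {L₁ L₂ : List (α × Bool)} (h₁ : IsReduced L₁)
    (h₂ : IsReduced L₂) :
    ∃ u c v, L₁ = u ++ c ∧ L₂ = invRev c ++ v ∧ IsReduced (u ++ v) := by
  induction L₁ using List.reverseRecOn generalizing L₂ with
  | nil => exact ⟨[], [], L₂, rfl, rfl, h₂⟩
  | append_singleton L₁ a ih =>
    by_cases hcancel : ∃ L₂', L₂ = (a.1, !a.2) :: L₂'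
    · obtain ⟨L₂', rfl⟩ := hcancel
      obtain ⟨u, c, v, rfl, rfl, huv⟩ :=
        ih (h₁.infix (List.prefix_append _ _).isInfix) (h₂.infix (List.suffix_cons _ _).isInfix)
      exact ⟨u, c ++ [a], v, by simp, by simp [invRev], huv⟩
    · refine ⟨L₁ ++ [a], [], L₂, by simp, by simp [invRev], ?_⟩
      have hboundary : IsReduced ([a] ++ L₂) := by
        rcases L₂ with _ | ⟨b, L₂'⟩
        · exact .singleton
        · refine isReduced_cons_cons.mpr ⟨fun hab => ?_, h₂⟩
          by_contra hne
          exact hcancel ⟨L₂', by rw [← Bool.eq_not.mpr (Ne.symm hne), hab]⟩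
      simpa using h₁.append_overlap hboundary (List.cons_ne_nil _ _)

theorem mk_append_mul_mk_invRev_append (L c M : List (α × Bool)) :
    mk (L ++ c) * mk (invRev c ++ M) = mk (L ++ M) := by
  simp only [← mul_mk, ← inv_mk, mul_assoc, mul_inv_cancel_left]

variable [DecidableEq α]

theorem exists_toWord_mul (x y : FreeGroup α) :
    ∃ u c v, x.toWord = u ++ c ∧ y.toWord = invRev c ++ v ∧ (x * y).toWord = u ++ v := by
  obtain ⟨u, c, v, hx, hy, huv⟩ :=
    (isReduced_toWord (x := x)).exists_cancel_append (isReduced_toWord (x := y))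
  refine ⟨u, c, v, hx, hy, ?_⟩
  rw [← mk_toWord (x := x), ← mk_toWord (x := y), hx, hy, mk_append_mul_mk_invRev_append,
    toWord_mk, huv.reduce_eq]

theorem toWord_mk_of_infix {w : List (α × Bool)} {x : FreeGroup α} (h : w <:+: x.toWord) :
    (mk w).toWord = w := by
  rw [toWord_mk]
  exact (isReduced_toWord.infix h).reduce_eq

theorem injective_of_pow (a : α) : Function.Injective fun k : ℕ => of a ^ k := fun k l hkl => by
  simpa using congrArg norm hkl

end FreeGroup

open Topology

theorem Filter.Tendsto.closure_range_eq_insert {X ι : Type*} [TopologicalSpace X] [T2Space X]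
    [Infinite ι] {f : ι → X} {x : X} (hf : Tendsto f cofinite (𝓝 x)) :
    closure (Set.range f) = insert x (Set.range f) :=
  subset_antisymm
    (hf.isCompact_insert_range_of_cofinite.isClosed.closure_subset_iff.mpr (Set.subset_insert _ _))
    (Set.insert_subset (mem_closure_of_tendsto hf (Eventually.of_forall Set.mem_range_self))
      subset_closure)

namespace GraphTrees

open FreeGroup

variable {n : ℕ}

theorem isPref_iff_prefix {h g : FreeGroup (Fin n)} : IsPref h g ↔ h.toWord <+: g.toWord := by
  constructor
  · intro hpref
    obtain ⟨u, c, v, hu, hc, huv⟩ := exists_toWord_mul h⁻¹ g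
    have hlen := congrArg List.length hu
    simp only [IsPref, wlen, huv, hc, toWord_inv, invRev_length, List.length_append] at hpref hlen
    obtain rfl : u = [] := List.eq_nil_of_length_eq_zero (by omega)
    rw [toWord_inv, List.nil_append] at hu
    rw [hc, ← hu, invRev_invRev]
    exact List.prefix_append _ _
  · rintro ⟨w, hw⟩
    have hquot : h⁻¹ * g = mk w := by
      rw [inv_mul_eq_iff_eq_mul, ← mk_toWord (x := g), ← hw, ← mul_mk, mk_toWord]
    have hword : (mk w).toWord = w := toWord_mk_of_infix (hw ▸ (List.suffix_append _ _).isInfix)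
    simp only [IsPref, wlen, hquot, hword, ← hw, List.length_append]

theorem IsTree.mk_mem_of_prefix {S : Set (FreeGroup (Fin n))} (hS : IsTree S)
    {g : FreeGroup (Fin n)} (hg : g ∈ S) {w : List (Fin n × Bool)} (hw : w <+: g.toWord) :
    mk w ∈ S :=
  hS.2.2 g hg _ (isPref_iff_prefix.mpr (by rwa [toWord_mk_of_infix hw.isInfix]))

theorem mem_translate {S : Set (FreeGroup (Fin n))} {g x : FreeGroup (Fin n)} :
    x ∈ translate S g ↔ g * x ∈ S := by
  simp [translate]

theorem translate_univ (g : FreeGroup (Fin n)) : translate Set.univ g = Set.univ :=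
  Set.eq_univ_of_forall fun _ => mem_translate.mpr trivial

/-- A prefix `h` of `x` is a vertex of the geodesic from `1` to `x`, so `g * h` lies on the
geodesic from `g` to `g * x`: it is a prefix of `g` or of `g * x`. -/
theorem IsTree.translate {S : Set (FreeGroup (Fin n))} (hS : IsTree S) {g : FreeGroup (Fin n)}
    (hg : g ∈ S) : IsTree (translate S g) := by
  refine ⟨mem_translate.mpr (by rwa [mul_one]),
    hS.2.1.image (mul_right_injective _).injOn, fun x hx h hpref => ?_⟩
  rw [mem_translate] at hx ⊢
  obtain ⟨q, hq⟩ := isPref_iff_prefix.mp hpref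
  obtain ⟨u, c, v, hgw, hxw, hgx⟩ := exists_toWord_mul g x
  rcases List.prefix_or_prefix_of_prefix ⟨q, hq⟩ (hxw ▸ List.prefix_append (invRev c) v)
    with ⟨r, hr⟩ | ⟨p, hp⟩
  · have hc : c = invRev r ++ invRev h.toWord := by rw [← invRev_append, hr, invRev_invRev]
    have hgh : g * h = mk (u ++ invRev r) := by
      rw [← mk_toWord (x := g), hgw, hc, ← List.append_assoc, ← mul_mk, ← inv_mk, mk_toWord,
        inv_mul_cancel_right]
    rw [hgh]
    exact hS.mk_mem_of_prefix hg (hgw ▸ hc ▸ List.append_assoc .. ▸ List.prefix_append _ _)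
  · have hv : v = p ++ q := by
      rw [hxw, ← hp, List.append_assoc] at hq
      exact (List.append_cancel_left hq).symm
    have hgh : g * h = mk (u ++ p) := by
      rw [← mk_toWord (x := g), hgw, ← mk_toWord (x := h), ← hp,
        mk_append_mul_mk_invRev_append]
    rw [hgh]
    exact hS.mk_mem_of_prefix hx (hgx ▸ hv ▸ List.append_assoc .. ▸ List.prefix_append _ _)

theorem eq_univ_of_translate_eq_univ {S : Set (FreeGroup (Fin n))} {g : FreeGroup (Fin n)}
    (h : translate S g = Set.univ) : S = Set.univ :=
  Set.eq_univ_of_forall fun x => by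
    simpa using mem_translate.mp (h ▸ Set.mem_univ (g⁻¹ * x) : g⁻¹ * x ∈ translate S g)

theorem finite_setOf_wlen_lt (m : ℕ) : {g : FreeGroup (Fin n) | wlen g < m}.Finite :=
  (List.finite_length_lt _ m).preimage toWord_injective.injOn

def X.translate (S : X n) (g : S.1) : X n := ⟨GraphTrees.translate S.1 g, S.2.translate g.2⟩

theorem X.range_translate (S : X n) : Set.range S.translate = orbit S := by
  ext T
  constructor
  · rintro ⟨g, rfl⟩
    exact ⟨g, g.2, rfl⟩
  · rintro ⟨g, hg, hT⟩
    exact ⟨⟨g, hg⟩, Subtype.ext hT.symm⟩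

theorem dist_le_of_ball_eq {S T : X n} {m : ℕ} (h : ball S m = ball T m) :
    dist S T ≤ Real.exp (-m) := by
  rcases eq_or_ne S T with rfl | hne
  · simpa using (Real.exp_pos _).le
  · rw [dist_eq_tdist, tdist_eq_of_ne hne, Real.exp_le_exp, neg_le_neg_iff]
    exact_mod_cast le_csSup (bddAbove_agreeSet hne) h

theorem ball_eq_of_dist_lt {S T : X n} {m : ℕ} (h : dist S T < Real.exp (-m)) :
    ball S m = ball T m := by
  rcases eq_or_ne S T with rfl | hne
  · rfl
  · rw [dist_eq_tdist, tdist_eq_of_ne hne, Real.exp_lt_exp, neg_lt_neg_iff] at h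
    exact ball_mono_eq (by exact_mod_cast h.le)
      (Nat.sSup_mem ⟨0, zero_mem_agreeSet S T⟩ (bddAbove_agreeSet hne))

theorem nhds_basis_ball_eq (T : X n) :
    (𝓝 T).HasBasis (fun _ => True) fun m => {S | ball S m = ball T m} := by
  refine Metric.nhds_basis_ball.to_hasBasis (fun ε hε => ?_)
    fun m _ => ⟨Real.exp (-m), Real.exp_pos _, fun S hS => ball_eq_of_dist_lt hS⟩
  obtain ⟨m, hm⟩ := exists_nat_gt (-Real.log ε)
  have hexp : Real.exp (-m) < ε := by
    rw [← Real.exp_log hε, Real.exp_lt_exp]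
    linarith
  exact ⟨m, trivial, fun S hS => (dist_le_of_ball_eq hS).trans_lt hexp⟩

theorem mem_branchL_iff {g : FreeGroup (Fin 2)} :
    g ∈ branchL ↔ g = 1 ∨ [((0 : Fin 2), true)] <+: g.toWord := by
  rw [branchL, Set.mem_union, Set.mem_singleton_iff, Set.mem_ofPred_eq, isPref_iff_prefix,
    toWord_of]

theorem pow_mem_branchL (k : ℕ) : of (0 : Fin 2) ^ k ∈ branchL := by
  rcases k with _ | k
  · exact mem_branchL_iff.mpr (Or.inl (pow_zero _))
  · exact mem_branchL_iff.mpr (Or.inr (by simp [toWord_of_pow, List.replicate_succ]))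

theorem isTree_branchL : IsTree branchL := by
  refine ⟨mem_branchL_iff.mpr (Or.inl rfl),
    Set.infinite_of_injective_forall_mem (injective_of_pow 0) pow_mem_branchL,
    fun g hg h hpref => mem_branchL_iff.mpr ?_⟩
  rw [isPref_iff_prefix] at hpref
  rcases hh : h.toWord with _ | ⟨a, t⟩
  · exact Or.inl (toWord_eq_nil_iff.mp hh)
  · rcases mem_branchL_iff.mp hg with rfl | h0
    · simp_all
    · right
      rcases List.prefix_or_prefix_of_prefix h0 (hh ▸ hpref) with h' | h'
      · exact h'
      · simp_all [List.cons_prefix_cons]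

theorem isTree_univ : IsTree (Set.univ : Set (FreeGroup (Fin 2))) :=
  ⟨trivial, isTree_branchL.2.1.mono (Set.subset_univ _), fun _ _ _ _ => trivial⟩

theorem branchL_ne_univ : branchL ≠ Set.univ := fun h => by
  have : of (1 : Fin 2) ∈ branchL := h ▸ Set.mem_univ _
  simp [mem_branchL_iff, toWord_of] at this

theorem mul_mem_branchL {g h : FreeGroup (Fin 2)} (hg : g ∈ branchL) (hh : wlen h ≤ wlen g) :
    g * h ∈ branchL := by
  obtain ⟨u, c, v, hgw, hhw, hghw⟩ := exists_toWord_mul g h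
  rcases u with _ | ⟨a, u⟩
  · have hv : v = [] := by
      simp only [wlen, hgw, hhw, List.nil_append, List.length_append, invRev_length] at hh
      exact List.eq_nil_of_length_eq_zero (by omega)
    rw [hv, List.nil_append, toWord_eq_nil_iff] at hghw
    exact mem_branchL_iff.mpr (Or.inl hghw)
  · rcases mem_branchL_iff.mp hg with rfl | h0
    · simp at hgw
    · rw [hgw] at h0
      rw [mem_branchL_iff, hghw]
      simp_all [List.cons_prefix_cons]

theorem ball_translate_branch {L G : X 2} (hL : L.1 = branchL) (hG : G.1 = Set.univ) (g : L.1)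
    {m : ℕ} (hm : m ≤ wlen g.1) : ball (L.translate g) m = ball G m := by
  ext h
  simp only [ball, X.translate, hG, mem_translate, Set.mem_ofPred_eq, Set.mem_univ, true_and]
  have hg : g.1 ∈ branchL := hL ▸ g.2
  exact and_iff_right_of_imp fun hh =>
    (Set.ext_iff.mp hL _).mpr (mul_mem_branchL hg (hh.trans hm))

theorem tendsto_translate_branch {L G : X 2} (hL : L.1 = branchL) (hG : G.1 = Set.univ) :
    Tendsto L.translate cofinite (𝓝 G) := by
  refine (nhds_basis_ball_eq G).tendsto_right_iff.mpr fun m _ => eventually_cofinite.mpr ?_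
  refine ((finite_setOf_wlen_lt m).preimage Subtype.val_injective.injOn).subset fun g hg => ?_
  by_contra hlen
  exact hg (ball_translate_branch hL hG g (not_lt.mp hlen))

/-- The closure of the orbit of the branch `L` consists of the orbit of `L` together with
the full Cayley tree, which is a fixed point of the action not in the orbit of `L`; hence
the closure consists of exactly two orbits. -/
theorem closure_orbit_branch :
    IsTree branchL ∧ IsTree (Set.univ : Set (FreeGroup (Fin 2))) ∧
    ∀ L G : X 2, L.1 = branchL → G.1 = Set.univ →
      closure (orbit L) = orbit L ∪ {G} ∧
      G ∉ orbit L ∧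
      ∀ g : FreeGroup (Fin 2), translate G.1 g = G.1 := by
  refine ⟨isTree_branchL, isTree_univ,
    fun L G hL hG => ⟨?_, ?_, fun g => hG ▸ translate_univ g⟩⟩
  · have : Infinite L.1 := L.2.2.1.to_subtype
    rw [← X.range_translate, Set.union_singleton]
    exact (tendsto_translate_branch hL hG).closure_range_eq_insert
  · rintro ⟨g, -, hGg⟩
    exact branchL_ne_univ (hL ▸ eq_univ_of_translate_eq_univ (hGg ▸ hG))

end GraphTrees
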